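/- If T is a theory of unital C*-algebras such that the minimal tensor norm predicate P^min is T-definable, then every model A of T has property min-U for every ultrafilter U. -/
import Mathlib


open scoped TensorProduct
open Filter Topology Function

noncomputable section

/-- The star operation on the algebraic tensor product `A ⊗[ℂ] B` of two complex
C*-algebras, determined by `star (a ⊗ b) = star a ⊗ star b`. -/
def tensorStar (A B : Type) [CStarAlgebra A] [CStarAlgebra B] :
    A ⊗[ℂ] B →+ A ⊗[ℂ] B :=
  TensorProduct.liftAddHom
    { toFun := fun a =>
        { toFun := fun b => star a ⊗ₜ[ℂ] star b
          map_zero' := by simp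
          map_add' := fun b b' => by simp [star_add, TensorProduct.tmul_add] }
      map_zero' := by ext b; simp
      map_add' := fun a a' => by ext b; simp [star_add, TensorProduct.add_tmul] }
    (fun c a b => by
      simp [star_smul, TensorProduct.smul_tmul, TensorProduct.tmul_smul])

/-- A C*-norm on the algebraic tensor product `A ⊗[ℂ] B`: a submultiplicative,
star-invariant norm satisfying the C*-identity (so that the completion with respect to it
is a C*-algebra). -/
structure IsCStarNorm {A B : Type} [CStarAlgebra A] [CStarAlgebra B]
    (nu : A ⊗[ℂ] B → ℝ) : Prop where
  eq_zero_iff : ∀ x, nu x = 0 ↔ x = 0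
  nonneg : ∀ x, 0 ≤ nu x
  add_le : ∀ x y, nu (x + y) ≤ nu x + nu y
  smul_eq : ∀ (c : ℂ) x, nu (c • x) = ‖c‖ * nu x
  mul_le : ∀ x y, nu (x * y) ≤ nu x * nu y
  star_eq : ∀ x, nu (tensorStar A B x) = nu x
  cstar : ∀ x, nu (tensorStar A B x * x) = nu x ^ 2

/-- The minimal tensor norm on `A ⊗[ℂ] B`: by Takesaki's theorem, the minimal C*-norm
on the algebraic tensor product. -/
def minNorm (A B : Type) [CStarAlgebra A] [CStarAlgebra B] (x : A ⊗[ℂ] B) : ℝ :=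
  sInf {r : ℝ | ∃ nu : A ⊗[ℂ] B → ℝ, IsCStarNorm nu ∧ r = nu x}

/-- A family of elements of C*-algebras is (uniformly norm-)bounded. -/
def Bdd {I : Type} {A : I → Type} [∀ i, CStarAlgebra (A i)] (f : ∀ i, A i) : Prop :=
  ∃ M : ℝ, ∀ i, ‖f i‖ ≤ M

/-- `π : (∀ i, A i) → B` realizes `B` as the C*-algebra ultraproduct `∏_U A_i`, i.e. as
the quotient of the ℓ∞-product of the `A i` by the ideal of bounded families whose norms
tend to `0` along `U`:  `π` is a unital *-homomorphism on bounded families, every element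
of `B` lifts to a bounded family (with control of norms), and the norm of `π f` is the
`U`-limit of the norms `‖f i‖`.  This data determines `B` uniquely up to isometric
*-isomorphism. -/
structure IsCStarUltraproduct {I : Type} (U : Ultrafilter I) (A : I → Type)
    [∀ i, CStarAlgebra (A i)] (B : Type) [CStarAlgebra B]
    (π : (∀ i, A i) → B) : Prop where
  map_one : π 1 = 1
  map_add : ∀ f g, Bdd f → Bdd g → π (f + g) = π f + π g
  map_mul : ∀ f g, Bdd f → Bdd g → π (f * g) = π f * π g
  map_star : ∀ f, Bdd f → π (star f) = star (π f)
  map_smul : ∀ (c : ℂ) f, Bdd f → π (c • f) = c • π f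
  norm_eq : ∀ f, Bdd f → Tendsto (fun i => ‖f i‖) (U : Filter I) (nhds ‖π f‖)
  surj : ∀ b : B, ∃ f, (∀ i, ‖f i‖ ≤ ‖b‖) ∧ π f = b

/-- *-polynomial terms in `n` variables over `ℂ`: the terms of the continuous-logic
language of (unital) C*-algebras. -/
inductive CTerm : ℕ → Type
  | var {n : ℕ} : Fin n → CTerm n
  | one {n : ℕ} : CTerm n
  | add {n : ℕ} : CTerm n → CTerm n → CTerm n
  | mul {n : ℕ} : CTerm n → CTerm n → CTerm n
  | star {n : ℕ} : CTerm n → CTerm n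
  | smul {n : ℕ} : ℂ → CTerm n → CTerm n

/-- Evaluation of a *-polynomial term in a C*-algebra. -/
def CTerm.eval {A : Type} [CStarAlgebra A] : ∀ {n : ℕ}, CTerm n → (Fin n → A) → A
  | _, CTerm.var i, a => a i
  | _, CTerm.one, _ => 1
  | _, CTerm.add s t, a => CTerm.eval s a + CTerm.eval t a
  | _, CTerm.mul s t, a => CTerm.eval s a * CTerm.eval t a
  | _, CTerm.star t, a => Star.star (CTerm.eval t a)
  | _, CTerm.smul c t, a => c • CTerm.eval t a

/-- Formulas of the continuous-logic language of (unital) C*-algebras in `n` free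
variables (all variables ranging over the closed unit ball): atomic formulas `‖t‖` for
*-polynomial terms `t`, closed under continuous combinations and the quantifiers
`sup` and `inf` over the unit ball. -/
inductive Formula : ℕ → Type
  | atom {n : ℕ} : CTerm n → Formula n
  | comb {n k : ℕ} (u : (Fin k → ℝ) → ℝ) (hu : Continuous u)
      (phis : Fin k → Formula n) : Formula n
  | sup {n : ℕ} : Formula (n + 1) → Formula n
  | inf {n : ℕ} : Formula (n + 1) → Formula n

/-- The interpretation of a formula in a (unital) C*-algebra, the quantified variables
ranging over the closed unit ball. -/
def Formula.interp (A : Type) [CStarAlgebra A] :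
    ∀ {n : ℕ}, Formula n → (Fin n → A) → ℝ
  | _, Formula.atom t, a => ‖t.eval a‖
  | _, Formula.comb u _ phis, a => u fun j => (phis j).interp A a
  | _, Formula.sup phi, a => ⨆ b : {x : A // ‖x‖ ≤ 1}, phi.interp A (Fin.snoc a b.1)
  | _, Formula.inf phi, a => ⨅ b : {x : A // ‖x‖ ≤ 1}, phi.interp A (Fin.snoc a b.1)

/-- A sentence is a formula with no free variables. -/
abbrev Sentence := Formula 0

/-- A theory of (unital) C*-algebras: a set of sentences, each imposed as the condition
`σ = 0`. -/
abbrev CStarTheory := Set Sentence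

/-- `A` is a model of the theory `T`. -/
def Models (A : Type) [CStarAlgebra A] (T : CStarTheory) : Prop :=
  ∀ σ ∈ T, σ.interp A finZeroElim = 0

/-- The minimal tensor norm predicate `P^min` is `T`-definable: for each `n`, the
`T`-function `(a, b) ↦ ‖Σ a_k ⊗ b_k‖_min` (on `2n`-tuples from the unit ball) is realized
by a `T`-formula, i.e. it is a uniform-over-models-of-`T` limit of interpretations of
formulas. -/
def MinDefinableOver (T : CStarTheory) : Prop :=
  ∀ (n : ℕ) (ε : ℝ), 0 < ε → ∃ phi : Formula (n + n),
    ∀ (A : Type) [CStarAlgebra A], Models A T →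
      ∀ a b : Fin n → A, (∀ k, ‖a k‖ ≤ 1) → (∀ k, ‖b k‖ ≤ 1) →
        |minNorm A A (∑ k, a k ⊗ₜ[ℂ] b k) - phi.interp A (Fin.append a b)| ≤ ε

/-- `A` has property min-`U`: for every realization of the ultrapower `A^U` and every
ultrapower tensor `Σ_k a^k ⊗ b^k` (presented by bounded families of representatives), the
norm computed in `A^U ⊗_min A^U` agrees with the norm of its natural image in
`(A ⊗_min A)^U`, i.e. the natural *-algebra embedding
`A^U ⊙ A^U → (A ⊗_min A)^U` extends to an isometric embedding
`A^U ⊗_min A^U → (A ⊗_min A)^U`. -/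
def HasMinU {I : Type} (U : Ultrafilter I) (A : Type) [CStarAlgebra A] : Prop :=
  ∀ (B : Type) [CStarAlgebra B] (π : (I → A) → B),
    IsCStarUltraproduct U (fun _ => A) B π →
    ∀ (n : ℕ) (f g : Fin n → I → A), (∀ k, Bdd (f k)) → (∀ k, Bdd (g k)) →
      Tendsto (fun i => minNorm A A (∑ k, f k i ⊗ₜ[ℂ] g k i)) (U : Filter I)
        (nhds (minNorm B B (∑ k, π (f k) ⊗ₜ[ℂ] π (g k))))

/-! ### Auxiliary lemmas -/

open scoped Pointwise

section Aux

lemma aux_norm_one_le (A : Type) [CStarAlgebra A] : ‖(1 : A)‖ ≤ 1 := by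
  have h := CStarRing.norm_star_mul_self (x := (1 : A))
  simp at h
  nlinarith [norm_nonneg (1 : A)]

instance aux_ball_nonempty (A : Type) [CStarAlgebra A] :
    Nonempty {x : A // ‖x‖ ≤ 1} := ⟨⟨0, by simp⟩⟩

lemma aux_comp_append {α β : Type} {n : ℕ} (F : α → β) (f g : Fin n → α) :
    (fun k => F (Fin.append f g k)) = Fin.append (fun k => F (f k)) (fun k => F (g k)) :=
  funext fun k => Fin.addCases (fun i => by simp) (fun i => by
    have h1 := Fin.append_right f g i
    have h2 := Fin.append_right (fun k => F (f k)) (fun k => F (g k)) i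
    simp [Fin.natAdd, Fin.addNat] at *
    rw [h1, h2]) k

lemma aux_forall_append {α : Type} {n : ℕ} (P : α → Prop) (f g : Fin n → α)
    (hf : ∀ k, P (f k)) (hg : ∀ k, P (g k)) : ∀ k, P (Fin.append f g k) :=
  fun k => Fin.addCases (fun j => by simpa using hf j) (fun j => by
    have h1 := Fin.append_right f g j
    simp [Fin.natAdd, Fin.addNat] at h1 ⊢
    rw [h1]; exact hg j) k

lemma aux_comp_snoc' {α β : Type} {n : ℕ} (F : α → β) (f : Fin n → α) (x : α) :
    (fun k => F ((Fin.snoc f x : Fin (n + 1) → α) k)) =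
      (Fin.snoc (fun k => F (f k)) (F x) : Fin (n + 1) → β) :=
  funext fun k => Fin.lastCases (by simp) (fun j => by simp) k

lemma aux_snoc_norm_le {A : Type} [CStarAlgebra A] {n : ℕ} {a : Fin n → A} {b : A} {R : ℝ}
    (ha : ∀ k, ‖a k‖ ≤ R) (hb : ‖b‖ ≤ 1) :
    ∀ k, ‖(Fin.snoc a b : Fin (n + 1) → A) k‖ ≤ max R 1 :=
  fun k => Fin.lastCases (by simpa using hb.trans (le_max_right R 1))
    (fun j => by simpa using (ha j).trans (le_max_left R 1)) k

/-- Bound for *-polynomial terms, uniform over all C*-algebras. -/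
lemma aux_cterm_bound {n : ℕ} (t : CTerm n) : ∀ R : ℝ, ∃ C : ℝ, 0 ≤ C ∧
    ∀ (A : Type) [CStarAlgebra A] (a : Fin n → A), (∀ k, ‖a k‖ ≤ R) → ‖t.eval a‖ ≤ C := by
  induction t with
  | var i =>
    intro R
    exact ⟨max R 0, le_max_right _ _, fun A _ a ha => by
      simpa [CTerm.eval] using (ha i).trans (le_max_left R 0)⟩
  | one =>
    intro R
    exact ⟨1, zero_le_one, fun A _ a _ => by simpa [CTerm.eval] using aux_norm_one_le A⟩
  | add s t ihs iht =>
    intro R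
    obtain ⟨C1, hC1, h1⟩ := ihs R
    obtain ⟨C2, hC2, h2⟩ := iht R
    refine ⟨C1 + C2, by positivity, fun A _ a ha => ?_⟩
    simp only [CTerm.eval]
    exact (norm_add_le _ _).trans (add_le_add (h1 A a ha) (h2 A a ha))
  | mul s t ihs iht =>
    intro R
    obtain ⟨C1, hC1, h1⟩ := ihs R
    obtain ⟨C2, hC2, h2⟩ := iht R
    refine ⟨C1 * C2, by positivity, fun A _ a ha => ?_⟩
    simp only [CTerm.eval]
    exact (norm_mul_le _ _).trans (mul_le_mul (h1 A a ha) (h2 A a ha) (norm_nonneg _) hC1)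
  | star t iht =>
    intro R
    obtain ⟨C, hC, h⟩ := iht R
    refine ⟨C, hC, fun A _ a ha => ?_⟩
    simp only [CTerm.eval, norm_star]
    exact h A a ha
  | smul c t iht =>
    intro R
    obtain ⟨C, hC, h⟩ := iht R
    refine ⟨‖c‖ * C, by positivity, fun A _ a ha => ?_⟩
    simp only [CTerm.eval, norm_smul]
    exact mul_le_mul_of_nonneg_left (h A a ha) (norm_nonneg c)

/-- Bound for formulas, uniform over all C*-algebras. -/
lemma aux_formula_bound {n : ℕ} (φ : Formula n) : ∀ R : ℝ, ∃ C : ℝ, 0 ≤ C ∧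
    ∀ (A : Type) [CStarAlgebra A] (a : Fin n → A), (∀ k, ‖a k‖ ≤ R) →
      |φ.interp A a| ≤ C := by
  induction φ with
  | atom t =>
    intro R
    obtain ⟨C, hC, h⟩ := aux_cterm_bound t R
    refine ⟨C, hC, fun A _ a ha => ?_⟩
    simp only [Formula.interp, abs_norm]
    exact h A a ha
  | @comb n' k' u hu phis ih =>
    intro R
    choose C hC0 hC using fun j => ih j R
    set S : ℝ := ∑ j, C j with hS
    have hS0 : 0 ≤ S := Finset.sum_nonneg fun j _ => hC0 j
    have hCS : ∀ j, C j ≤ S :=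
      fun j => Finset.single_le_sum (fun j _ => hC0 j) (Finset.mem_univ j)
    have hcpt : IsCompact (Set.Icc (fun _ => -S) (fun _ => S) : Set (Fin k' → ℝ)) :=
      isCompact_Icc
    obtain ⟨D, hD⟩ := hcpt.exists_bound_of_continuousOn hu.continuousOn
    refine ⟨max D 0, le_max_right _ _, fun A _ a ha => ?_⟩
    simp only [Formula.interp]
    have hmem : (fun j => (phis j).interp A a) ∈
        (Set.Icc (fun _ => -S) (fun _ => S) : Set (Fin k' → ℝ)) := by
      rw [Set.mem_Icc]
      constructor <;> intro j
      · exact le_trans (neg_le_neg (hCS j)) (abs_le.mp (hC j A a ha)).1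
      · exact le_trans (abs_le.mp (hC j A a ha)).2 (hCS j)
    calc |u fun j => (phis j).interp A a| = ‖u fun j => (phis j).interp A a‖ := rfl
      _ ≤ D := hD _ hmem
      _ ≤ max D 0 := le_max_left _ _
  | sup φ ih =>
    intro R
    obtain ⟨C, hC0, hC⟩ := ih (max R 1)
    refine ⟨C, hC0, fun A _ a ha => ?_⟩
    have key : ∀ b : {x : A // ‖x‖ ≤ 1}, |φ.interp A (Fin.snoc a b.1)| ≤ C :=
      fun b => hC A _ (aux_snoc_norm_le ha b.2)
    have hbdd : BddAbove (Set.range fun b : {x : A // ‖x‖ ≤ 1} =>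
        φ.interp A (Fin.snoc a b.1)) := by
      refine ⟨C, ?_⟩
      rintro r ⟨b, rfl⟩
      exact (abs_le.mp (key b)).2
    simp only [Formula.interp]
    rw [abs_le]
    refine ⟨?_, ciSup_le fun b => (abs_le.mp (key b)).2⟩
    calc -C ≤ φ.interp A (Fin.snoc a (0 : A)) :=
          (abs_le.mp (key ⟨0, by simp⟩)).1
      _ ≤ _ := le_ciSup hbdd (⟨0, by simp⟩ : {x : A // ‖x‖ ≤ 1})
  | inf φ ih =>
    intro R
    obtain ⟨C, hC0, hC⟩ := ih (max R 1)
    refine ⟨C, hC0, fun A _ a ha => ?_⟩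
    have key : ∀ b : {x : A // ‖x‖ ≤ 1}, |φ.interp A (Fin.snoc a b.1)| ≤ C :=
      fun b => hC A _ (aux_snoc_norm_le ha b.2)
    have hbdd : BddBelow (Set.range fun b : {x : A // ‖x‖ ≤ 1} =>
        φ.interp A (Fin.snoc a b.1)) := by
      refine ⟨-C, ?_⟩
      rintro r ⟨b, rfl⟩
      exact (abs_le.mp (key b)).1
    simp only [Formula.interp]
    rw [abs_le]
    refine ⟨le_ciInf fun b => (abs_le.mp (key b)).1, ?_⟩
    calc (⨅ b : {x : A // ‖x‖ ≤ 1}, φ.interp A (Fin.snoc a b.1))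
        ≤ φ.interp A (Fin.snoc a (0 : A)) :=
          ciInf_le hbdd (⟨0, by simp⟩ : {x : A // ‖x‖ ≤ 1})
      _ ≤ C := (abs_le.mp (key ⟨0, by simp⟩)).2

end Aux

section Aux2

variable {I : Type} {A : Type} [CStarAlgebra A]

lemma aux_bdd_norm {f : I → A} (hf : Bdd f) : ∃ M : ℝ, 0 ≤ M ∧ ∀ i, ‖f i‖ ≤ M := by
  obtain ⟨M, hM⟩ := hf
  exact ⟨max M 0, le_max_right _ _, fun i => (hM i).trans (le_max_left _ _)⟩

lemma aux_bdd_add {f g : I → A} (hf : Bdd f) (hg : Bdd g) : Bdd (f + g) := by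
  obtain ⟨M, _, hM⟩ := aux_bdd_norm hf
  obtain ⟨N, _, hN⟩ := aux_bdd_norm hg
  exact ⟨M + N, fun i => (norm_add_le _ _).trans (add_le_add (hM i) (hN i))⟩

lemma aux_bdd_mul {f g : I → A} (hf : Bdd f) (hg : Bdd g) : Bdd (f * g) := by
  obtain ⟨M, hM0, hM⟩ := aux_bdd_norm hf
  obtain ⟨N, hN0, hN⟩ := aux_bdd_norm hg
  exact ⟨M * N, fun i =>
    (norm_mul_le _ _).trans (mul_le_mul (hM i) (hN i) (norm_nonneg _) hM0)⟩

lemma aux_bdd_star {f : I → A} (hf : Bdd f) : Bdd (star f) := by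
  obtain ⟨M, hM⟩ := hf
  exact ⟨M, fun i => by simpa [norm_star] using hM i⟩

lemma aux_bdd_smul (c : ℂ) {f : I → A} (hf : Bdd f) : Bdd (c • f) := by
  obtain ⟨M, hM⟩ := hf
  exact ⟨‖c‖ * M, fun i => by
    simpa [norm_smul] using mul_le_mul_of_nonneg_left (hM i) (norm_nonneg c)⟩

lemma aux_bdd_one : Bdd (1 : I → A) := ⟨1, fun _ => aux_norm_one_le A⟩

variable {B : Type} [CStarAlgebra B] {U : Ultrafilter I} {π : (I → A) → B}

/-- `π` commutes with evaluation of *-polynomial terms on bounded families. -/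
lemma aux_eval_family (hπ : IsCStarUltraproduct U (fun _ => A) B π)
    {n : ℕ} (t : CTerm n) : ∀ (h : Fin n → I → A), (∀ k, Bdd (h k)) →
      Bdd (fun i => t.eval fun k => h k i) ∧
        π (fun i => t.eval fun k => h k i) = t.eval fun k => π (h k) := by
  induction t with
  | var j =>
    intro h hh
    constructor
    · simp only [CTerm.eval]
      exact hh j
    · simp only [CTerm.eval]
  | one =>
    intro h hh
    constructor
    · simp only [CTerm.eval]
      exact ⟨1, fun _ => aux_norm_one_le A⟩
    · simp only [CTerm.eval]
      exact hπ.map_one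
  | add s t ihs iht =>
    intro h hh
    obtain ⟨bs, es⟩ := ihs h hh
    obtain ⟨bt, et⟩ := iht h hh
    have hfun : (fun i => CTerm.eval (s.add t) fun k => h k i) =
        (fun i => s.eval fun k => h k i) + (fun i => t.eval fun k => h k i) := by
      funext i
      simp only [CTerm.eval, Pi.add_apply]
    refine ⟨hfun ▸ aux_bdd_add bs bt, ?_⟩
    rw [hfun, hπ.map_add _ _ bs bt, es, et]
    simp only [CTerm.eval]
  | mul s t ihs iht =>
    intro h hh
    obtain ⟨bs, es⟩ := ihs h hh
    obtain ⟨bt, et⟩ := iht h hh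
    have hfun : (fun i => CTerm.eval (s.mul t) fun k => h k i) =
        (fun i => s.eval fun k => h k i) * (fun i => t.eval fun k => h k i) := by
      funext i
      simp only [CTerm.eval, Pi.mul_apply]
    refine ⟨hfun ▸ aux_bdd_mul bs bt, ?_⟩
    rw [hfun, hπ.map_mul _ _ bs bt, es, et]
    simp only [CTerm.eval]
  | star t iht =>
    intro h hh
    obtain ⟨bt, et⟩ := iht h hh
    have hfun : (fun i => CTerm.eval t.star fun k => h k i) =
        star (fun i => t.eval fun k => h k i) := by
      funext i
      simp only [CTerm.eval, Pi.star_apply]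
    refine ⟨hfun ▸ aux_bdd_star bt, ?_⟩
    rw [hfun, hπ.map_star _ bt, et]
    simp only [CTerm.eval]
  | smul c t iht =>
    intro h hh
    obtain ⟨bt, et⟩ := iht h hh
    have hfun : (fun i => CTerm.eval (t.smul c) fun k => h k i) =
        c • (fun i => t.eval fun k => h k i) := by
      funext i
      simp only [CTerm.eval, Pi.smul_apply]
    refine ⟨hfun ▸ aux_bdd_smul c bt, ?_⟩
    rw [hfun, hπ.map_smul _ _ bt, et]
    simp only [CTerm.eval]

/-- Łoś's theorem for the C*-ultraproduct: the interpretation of a formula at a point of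
the ultraproduct is the ultralimit of the interpretations at representatives. -/
lemma aux_los (hπ : IsCStarUltraproduct U (fun _ => A) B π)
    {n : ℕ} (φ : Formula n) : ∀ (h : Fin n → I → A) (M : ℝ), (∀ k i, ‖h k i‖ ≤ M) →
      Tendsto (fun i => φ.interp A fun k => h k i) (U : Filter I)
        (nhds (φ.interp B fun k => π (h k))) := by
  induction φ with
  | atom t =>
    intro h M hM
    obtain ⟨bd, eq⟩ := aux_eval_family hπ t h (fun k => ⟨M, hM k⟩)
    simp only [Formula.interp]
    rw [← eq]
    exact hπ.norm_eq _ bd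
  | @comb n' k' u hu phis ih =>
    intro h M hM
    simp only [Formula.interp]
    exact (hu.tendsto _).comp (tendsto_pi_nhds.mpr fun j => ih j h M hM)
  | sup φ ih =>
    intro h M hM
    have hBnorm : ∀ k, ‖π (h k)‖ ≤ M := fun k =>
      le_of_tendsto (hπ.norm_eq (h k) ⟨M, hM k⟩) (Eventually.of_forall (hM k))
    obtain ⟨C, hC0, hC⟩ := aux_formula_bound φ (max M 1)
    have hbddA : ∀ i : I, BddAbove (Set.range fun b : {x : A // ‖x‖ ≤ 1} =>
        φ.interp A (Fin.snoc (fun k => h k i) b.1)) := by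
      intro i
      refine ⟨C, ?_⟩
      rintro r ⟨b, rfl⟩
      exact (abs_le.mp (hC A _ (aux_snoc_norm_le (fun k => hM k i) b.2))).2
    have hbddB : BddAbove (Set.range fun b : {x : B // ‖x‖ ≤ 1} =>
        φ.interp B (Fin.snoc (fun k => π (h k)) b.1)) := by
      refine ⟨C, ?_⟩
      rintro r ⟨b, rfl⟩
      exact (abs_le.mp (hC B _ (aux_snoc_norm_le hBnorm b.2))).2
    simp only [Formula.interp]
    rw [Metric.tendsto_nhds]
    intro ε hε
    have hε3 : 0 < ε / 3 := by positivity
    -- upper bound eventually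
    have hwit : ∀ i : I, ∃ b : {x : A // ‖x‖ ≤ 1},
        (⨆ b : {x : A // ‖x‖ ≤ 1}, φ.interp A (Fin.snoc (fun k => h k i) b.1)) - ε / 3 <
          φ.interp A (Fin.snoc (fun k => h k i) b.1) :=
      fun i => exists_lt_of_lt_ciSup (sub_lt_self _ hε3)
    choose x hx using hwit
    have hy : ∀ i, ‖(x i).1‖ ≤ 1 := fun i => (x i).2
    have hsb : ∀ (k : Fin _) (i : I),
        ‖(Fin.snoc h (fun i => (x i).1) : Fin _ → I → A) k i‖ ≤ max M 1 := by
      intro k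
      refine Fin.lastCases ?_ ?_ k
      · intro i; rw [Fin.snoc_last]; exact (hy i).trans (le_max_right _ _)
      · intro j i; rw [Fin.snoc_castSucc]; exact (hM j i).trans (le_max_left _ _)
    have hIH := ih (Fin.snoc h (fun i => (x i).1)) (max M 1) hsb
    rw [show (fun k => π ((Fin.snoc h (fun i => (x i).1) : Fin _ → I → A) k)) =
        Fin.snoc (fun k => π (h k)) (π (fun i => (x i).1)) from
      aux_comp_snoc' π h (fun i => (x i).1)] at hIH
    have hIH' : Tendsto (fun i => φ.interp A (Fin.snoc (fun k => h k i) ((x i).1)))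
        (U : Filter I) (nhds (φ.interp B (Fin.snoc (fun k => π (h k))
          (π (fun i => (x i).1))))) := by
      refine Tendsto.congr (fun i => ?_) hIH
      exact congrArg (φ.interp A) (aux_comp_snoc' (fun v : I → A => v i) h _)
    have hπx : ‖π (fun i => (x i).1)‖ ≤ 1 :=
      le_of_tendsto (hπ.norm_eq _ ⟨1, hy⟩) (Eventually.of_forall hy)
    have hLG : φ.interp B (Fin.snoc (fun k => π (h k)) (π (fun i => (x i).1))) ≤
        ⨆ c : {x : B // ‖x‖ ≤ 1}, φ.interp B (Fin.snoc (fun k => π (h k)) c.1) :=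
      le_ciSup hbddB ⟨π (fun i => (x i).1), hπx⟩
    have hev1 := Metric.tendsto_nhds.mp hIH' (ε / 3) hε3
    -- lower bound eventually
    obtain ⟨c, hc⟩ : ∃ c : {x : B // ‖x‖ ≤ 1},
        (⨆ c : {x : B // ‖x‖ ≤ 1}, φ.interp B (Fin.snoc (fun k => π (h k)) c.1)) - ε / 3 <
          φ.interp B (Fin.snoc (fun k => π (h k)) c.1) :=
      exists_lt_of_lt_ciSup (sub_lt_self _ hε3)
    obtain ⟨z, hz1, hz2⟩ := hπ.surj c.1
    have hz1' : ∀ i, ‖z i‖ ≤ 1 := fun i => (hz1 i).trans c.2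
    have hsb2 : ∀ (k : Fin _) (i : I),
        ‖(Fin.snoc h z : Fin _ → I → A) k i‖ ≤ max M 1 := by
      intro k
      refine Fin.lastCases ?_ ?_ k
      · intro i; rw [Fin.snoc_last]; exact (hz1' i).trans (le_max_right _ _)
      · intro j i; rw [Fin.snoc_castSucc]; exact (hM j i).trans (le_max_left _ _)
    have hIH2 := ih (Fin.snoc h z) (max M 1) hsb2
    rw [show (fun k => π ((Fin.snoc h z : Fin _ → I → A) k)) =
        Fin.snoc (fun k => π (h k)) (π z) from aux_comp_snoc' π h z, hz2] at hIH2
    have hIH2' : Tendsto (fun i => φ.interp A (Fin.snoc (fun k => h k i) (z i)))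
        (U : Filter I) (nhds (φ.interp B (Fin.snoc (fun k => π (h k)) c.1))) := by
      refine Tendsto.congr (fun i => ?_) hIH2
      exact congrArg (φ.interp A) (aux_comp_snoc' (fun v : I → A => v i) h z)
    have hev2 := Metric.tendsto_nhds.mp hIH2' (ε / 3) hε3
    filter_upwards [hev1, hev2] with i h1 h2
    rw [Real.dist_eq, abs_lt] at h1 h2 ⊢
    constructor
    · -- G - ε < F i
      have hFi : φ.interp A (Fin.snoc (fun k => h k i) (z i)) ≤
          ⨆ b : {x : A // ‖x‖ ≤ 1}, φ.interp A (Fin.snoc (fun k => h k i) b.1) :=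
        le_ciSup (hbddA i) ⟨z i, hz1' i⟩
      linarith
    · -- F i < G + ε
      have := hx i
      linarith
  | inf φ ih =>
    intro h M hM
    have hBnorm : ∀ k, ‖π (h k)‖ ≤ M := fun k =>
      le_of_tendsto (hπ.norm_eq (h k) ⟨M, hM k⟩) (Eventually.of_forall (hM k))
    obtain ⟨C, hC0, hC⟩ := aux_formula_bound φ (max M 1)
    have hbddA : ∀ i : I, BddBelow (Set.range fun b : {x : A // ‖x‖ ≤ 1} =>
        φ.interp A (Fin.snoc (fun k => h k i) b.1)) := by
      intro i
      refine ⟨-C, ?_⟩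
      rintro r ⟨b, rfl⟩
      exact (abs_le.mp (hC A _ (aux_snoc_norm_le (fun k => hM k i) b.2))).1
    have hbddB : BddBelow (Set.range fun b : {x : B // ‖x‖ ≤ 1} =>
        φ.interp B (Fin.snoc (fun k => π (h k)) b.1)) := by
      refine ⟨-C, ?_⟩
      rintro r ⟨b, rfl⟩
      exact (abs_le.mp (hC B _ (aux_snoc_norm_le hBnorm b.2))).1
    simp only [Formula.interp]
    rw [Metric.tendsto_nhds]
    intro ε hε
    have hε3 : 0 < ε / 3 := by positivity
    have hwit : ∀ i : I, ∃ b : {x : A // ‖x‖ ≤ 1},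
        φ.interp A (Fin.snoc (fun k => h k i) b.1) <
          (⨅ b : {x : A // ‖x‖ ≤ 1}, φ.interp A (Fin.snoc (fun k => h k i) b.1)) + ε / 3 :=
      fun i => exists_lt_of_ciInf_lt (lt_add_of_pos_right _ hε3)
    choose x hx using hwit
    have hy : ∀ i, ‖(x i).1‖ ≤ 1 := fun i => (x i).2
    have hsb : ∀ (k : Fin _) (i : I),
        ‖(Fin.snoc h (fun i => (x i).1) : Fin _ → I → A) k i‖ ≤ max M 1 := by
      intro k
      refine Fin.lastCases ?_ ?_ k
      · intro i; rw [Fin.snoc_last]; exact (hy i).trans (le_max_right _ _)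
      · intro j i; rw [Fin.snoc_castSucc]; exact (hM j i).trans (le_max_left _ _)
    have hIH := ih (Fin.snoc h (fun i => (x i).1)) (max M 1) hsb
    rw [show (fun k => π ((Fin.snoc h (fun i => (x i).1) : Fin _ → I → A) k)) =
        Fin.snoc (fun k => π (h k)) (π (fun i => (x i).1)) from
      aux_comp_snoc' π h (fun i => (x i).1)] at hIH
    have hIH' : Tendsto (fun i => φ.interp A (Fin.snoc (fun k => h k i) ((x i).1)))
        (U : Filter I) (nhds (φ.interp B (Fin.snoc (fun k => π (h k))
          (π (fun i => (x i).1))))) := by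
      refine Tendsto.congr (fun i => ?_) hIH
      exact congrArg (φ.interp A) (aux_comp_snoc' (fun v : I → A => v i) h _)
    have hπx : ‖π (fun i => (x i).1)‖ ≤ 1 :=
      le_of_tendsto (hπ.norm_eq _ ⟨1, hy⟩) (Eventually.of_forall hy)
    have hLG : (⨅ c : {x : B // ‖x‖ ≤ 1}, φ.interp B (Fin.snoc (fun k => π (h k)) c.1)) ≤
        φ.interp B (Fin.snoc (fun k => π (h k)) (π (fun i => (x i).1))) :=
      ciInf_le hbddB ⟨π (fun i => (x i).1), hπx⟩
    have hev1 := Metric.tendsto_nhds.mp hIH' (ε / 3) hε3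
    obtain ⟨c, hc⟩ : ∃ c : {x : B // ‖x‖ ≤ 1},
        φ.interp B (Fin.snoc (fun k => π (h k)) c.1) <
          (⨅ c : {x : B // ‖x‖ ≤ 1}, φ.interp B (Fin.snoc (fun k => π (h k)) c.1)) + ε / 3 :=
      exists_lt_of_ciInf_lt (lt_add_of_pos_right _ hε3)
    obtain ⟨z, hz1, hz2⟩ := hπ.surj c.1
    have hz1' : ∀ i, ‖z i‖ ≤ 1 := fun i => (hz1 i).trans c.2
    have hsb2 : ∀ (k : Fin _) (i : I),
        ‖(Fin.snoc h z : Fin _ → I → A) k i‖ ≤ max M 1 := by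
      intro k
      refine Fin.lastCases ?_ ?_ k
      · intro i; rw [Fin.snoc_last]; exact (hz1' i).trans (le_max_right _ _)
      · intro j i; rw [Fin.snoc_castSucc]; exact (hM j i).trans (le_max_left _ _)
    have hIH2 := ih (Fin.snoc h z) (max M 1) hsb2
    rw [show (fun k => π ((Fin.snoc h z : Fin _ → I → A) k)) =
        Fin.snoc (fun k => π (h k)) (π z) from aux_comp_snoc' π h z, hz2] at hIH2
    have hIH2' : Tendsto (fun i => φ.interp A (Fin.snoc (fun k => h k i) (z i)))
        (U : Filter I) (nhds (φ.interp B (Fin.snoc (fun k => π (h k)) c.1))) := by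
      refine Tendsto.congr (fun i => ?_) hIH2
      exact congrArg (φ.interp A) (aux_comp_snoc' (fun v : I → A => v i) h z)
    have hev2 := Metric.tendsto_nhds.mp hIH2' (ε / 3) hε3
    filter_upwards [hev1, hev2] with i h1 h2
    rw [Real.dist_eq, abs_lt] at h1 h2 ⊢
    constructor
    · -- G - ε < F i
      have := hx i
      linarith
    · -- F i < G + ε
      have hFi : (⨅ b : {x : A // ‖x‖ ≤ 1}, φ.interp A (Fin.snoc (fun k => h k i) b.1)) ≤
          φ.interp A (Fin.snoc (fun k => h k i) (z i)) :=
        ciInf_le (hbddA i) ⟨z i, hz1' i⟩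
      linarith

/-- The ultraproduct of models of `T` is a model of `T`. -/
lemma aux_models_ultraproduct (hπ : IsCStarUltraproduct U (fun _ => A) B π)
    {T : CStarTheory} (hA : Models A T) : Models B T := by
  intro σ hσ
  have h0 : ∀ (k : Fin 0) (i : I), ‖(Fin.elim0 k : I → A) i‖ ≤ 0 := fun k => k.elim0
  have hlos := aux_los hπ σ Fin.elim0 0 h0
  have e : (fun k : Fin 0 => π (Fin.elim0 k)) = finZeroElim := funext fun k => k.elim0
  rw [e] at hlos
  have hconst : Tendsto (fun _ : I => σ.interp A finZeroElim) (U : Filter I)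
      (nhds (σ.interp B finZeroElim)) :=
    hlos.congr fun i => congrArg (σ.interp A) (funext fun k => k.elim0)
  rw [hA σ hσ] at hconst
  exact (tendsto_nhds_unique hconst tendsto_const_nhds)

end Aux2

section Aux3

lemma aux_minNorm_smul (A : Type) [CStarAlgebra A] (c : ℂ) (x : A ⊗[ℂ] A) :
    minNorm A A (c • x) = ‖c‖ * minNorm A A x := by
  have hset : {r : ℝ | ∃ nu : A ⊗[ℂ] A → ℝ, IsCStarNorm nu ∧ r = nu (c • x)} =
      ‖c‖ • {r : ℝ | ∃ nu : A ⊗[ℂ] A → ℝ, IsCStarNorm nu ∧ r = nu x} := by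
    ext r
    constructor
    · rintro ⟨nu, hnu, rfl⟩
      exact ⟨nu x, ⟨nu, hnu, rfl⟩, by show ‖c‖ • nu x = nu (c • x); rw [smul_eq_mul, hnu.smul_eq]⟩
    · rintro ⟨r', ⟨nu, hnu, rfl⟩, rfl⟩
      exact ⟨nu, hnu, by show ‖c‖ • nu x = nu (c • x); rw [smul_eq_mul, hnu.smul_eq]⟩
  rw [minNorm, minNorm, hset, Real.sInf_smul_of_nonneg (norm_nonneg c), smul_eq_mul]

lemma aux_core (T : CStarTheory) (hdef : MinDefinableOver T) {I : Type} (U : Ultrafilter I)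
    {A B : Type} [CStarAlgebra A] [CStarAlgebra B] {π : (I → A) → B}
    (hπ : IsCStarUltraproduct U (fun _ => A) B π) (hA : Models A T)
    (n : ℕ) (f g : Fin n → I → A) (hf : ∀ k i, ‖f k i‖ ≤ 1) (hg : ∀ k i, ‖g k i‖ ≤ 1) :
    Tendsto (fun i => minNorm A A (∑ k, f k i ⊗ₜ[ℂ] g k i)) (U : Filter I)
      (nhds (minNorm B B (∑ k, π (f k) ⊗ₜ[ℂ] π (g k)))) := by
  have hB : Models B T := aux_models_ultraproduct hπ hA
  have hπf : ∀ k, ‖π (f k)‖ ≤ 1 :=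
    fun k => le_of_tendsto (hπ.norm_eq _ ⟨1, hf k⟩) (Eventually.of_forall (hf k))
  have hπg : ∀ k, ‖π (g k)‖ ≤ 1 :=
    fun k => le_of_tendsto (hπ.norm_eq _ ⟨1, hg k⟩) (Eventually.of_forall (hg k))
  rw [Metric.tendsto_nhds]
  intro ε hε
  obtain ⟨φ, hφ⟩ := hdef n (ε / 4) (by positivity)
  have hhM : ∀ (k : Fin (n + n)) (i : I), ‖Fin.append f g k i‖ ≤ 1 :=
    aux_forall_append (fun u => ∀ i, ‖u i‖ ≤ 1) f g hf hg
  have hmain := aux_los hπ φ (Fin.append f g) 1 hhM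
  rw [show (fun k => π (Fin.append f g k)) =
      Fin.append (fun k => π (f k)) (fun k => π (g k)) from aux_comp_append π f g] at hmain
  have hmain' : Tendsto
      (fun i => φ.interp A (Fin.append (fun k => f k i) (fun k => g k i)))
      (U : Filter I)
      (nhds (φ.interp B (Fin.append (fun k => π (f k)) (fun k => π (g k))))) := by
    refine Tendsto.congr (fun i => ?_) hmain
    exact congrArg (φ.interp A) (aux_comp_append (fun u : I → A => u i) f g)
  have hev := Metric.tendsto_nhds.mp hmain' (ε / 4) (by positivity)
  have hBest := hφ B hB _ _ hπf hπg
  filter_upwards [hev] with i hi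
  have hAest := hφ A hA _ _ (fun k => hf k i) (fun k => hg k i)
  rw [Real.dist_eq, abs_lt] at hi ⊢
  rw [abs_le] at hAest hBest
  constructor <;> [linarith [hAest.1, hAest.2, hBest.1, hBest.2, hi.1, hi.2];
    linarith [hAest.1, hAest.2, hBest.1, hBest.2, hi.1, hi.2]]

end Aux3

/-- If `T` is a theory of unital C*-algebras such that the minimal
tensor norm predicate `P^min` is `T`-definable, then every model of `T` has property
min-`U` for every ultrafilter `U`. -/
theorem hasMinU_of_minNorm_definable (T : CStarTheory) (hdef : MinDefinableOver T) :
    ∀ (A : Type) [CStarAlgebra A], Models A T →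
      ∀ (I : Type) (U : Ultrafilter I), HasMinU U A := by
  intro A instA hA I U
  intro B instB π hπ n f g hf hg
  choose Mf hMf using hf
  choose Mg hMg using hg
  set M : ℝ := 1 + ∑ k, (|Mf k| + |Mg k|) with hM_def
  have hsum_nonneg : (0 : ℝ) ≤ ∑ k, (|Mf k| + |Mg k|) :=
    Finset.sum_nonneg fun k _ => by positivity
  have hM1 : 1 ≤ M := le_add_of_nonneg_right hsum_nonneg
  have hM0 : (0 : ℝ) < M := lt_of_lt_of_le one_pos hM1
  have hfM : ∀ k i, ‖f k i‖ ≤ M := by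
    intro k i
    have h1 : |Mf k| + |Mg k| ≤ ∑ j, (|Mf j| + |Mg j|) :=
      Finset.single_le_sum (f := fun j => |Mf j| + |Mg j|)
        (fun j _ => by positivity) (Finset.mem_univ k)
    have h2 := hMf k i
    have h3 : Mf k ≤ |Mf k| := le_abs_self _
    have h4 : (0 : ℝ) ≤ |Mg k| := abs_nonneg _
    rw [hM_def]; linarith
  have hgM : ∀ k i, ‖g k i‖ ≤ M := by
    intro k i
    have h1 : |Mf k| + |Mg k| ≤ ∑ j, (|Mf j| + |Mg j|) :=
      Finset.single_le_sum (f := fun j => |Mf j| + |Mg j|)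
        (fun j _ => by positivity) (Finset.mem_univ k)
    have h2 := hMg k i
    have h3 : Mg k ≤ |Mg k| := le_abs_self _
    have h4 : (0 : ℝ) ≤ |Mf k| := abs_nonneg _
    rw [hM_def]; linarith
  set c : ℂ := (M : ℂ)⁻¹ with hc_def
  have hcnorm : ‖c‖ = M⁻¹ := by
    rw [hc_def, norm_inv, Complex.norm_real, Real.norm_eq_abs, abs_of_pos hM0]
  set f' : Fin n → I → A := fun k => c • f k with hf'_def
  set g' : Fin n → I → A := fun k => c • g k with hg'_def
  have hnorm_smul_le : ∀ (v : I → A), (∀ i, ‖v i‖ ≤ M) → ∀ i, ‖(c • v) i‖ ≤ 1 := by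
    intro v hv i
    rw [Pi.smul_apply, norm_smul, hcnorm]
    calc M⁻¹ * ‖v i‖ ≤ M⁻¹ * M :=
          mul_le_mul_of_nonneg_left (hv i) (inv_nonneg.mpr hM0.le)
      _ = 1 := inv_mul_cancel₀ hM0.ne'
  have hf'1 : ∀ k i, ‖f' k i‖ ≤ 1 := fun k => hnorm_smul_le (f k) (hfM k)
  have hg'1 : ∀ k i, ‖g' k i‖ ≤ 1 := fun k => hnorm_smul_le (g k) (hgM k)
  have hcore := aux_core T hdef U hπ hA n f' g' hf'1 hg'1
  have hπf' : ∀ k, π (f' k) = c • π (f k) := fun k => hπ.map_smul c (f k) ⟨M, hfM k⟩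
  have hπg' : ∀ k, π (g' k) = c • π (g k) := fun k => hπ.map_smul c (g k) ⟨M, hgM k⟩
  have htmul : ∀ (C : Type) [CStarAlgebra C], ∀ (a b : C),
      (c • a) ⊗ₜ[ℂ] (c • b) = (c * c) • (a ⊗ₜ[ℂ] b) := by
    intro C _ a b
    rw [TensorProduct.tmul_smul, ← TensorProduct.smul_tmul', smul_smul]
  have htensorA : ∀ i, (∑ k, f' k i ⊗ₜ[ℂ] g' k i) = (c * c) • ∑ k, f k i ⊗ₜ[ℂ] g k i := by
    intro i
    rw [Finset.smul_sum]
    exact Finset.sum_congr rfl fun k _ => htmul A (f k i) (g k i)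
  have htensorB : (∑ k, π (f' k) ⊗ₜ[ℂ] π (g' k)) =
      (c * c) • ∑ k, π (f k) ⊗ₜ[ℂ] π (g k) := by
    rw [Finset.smul_sum]
    refine Finset.sum_congr rfl fun k _ => ?_
    rw [hπf' k, hπg' k]
    exact htmul B (π (f k)) (π (g k))
  have hrw : (fun i => minNorm A A (∑ k, f' k i ⊗ₜ[ℂ] g' k i)) =
      fun i => ‖c * c‖ * minNorm A A (∑ k, f k i ⊗ₜ[ℂ] g k i) := by
    funext i
    rw [htensorA i, aux_minNorm_smul]
  rw [hrw, htensorB, aux_minNorm_smul] at hcore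
  have hccne : ‖c * c‖ ≠ 0 := by
    rw [norm_mul, hcnorm]
    positivity
  have hfin := hcore.const_mul (‖c * c‖⁻¹)
  simp only [← mul_assoc, inv_mul_cancel₀ hccne, one_mul] at hfin
  exact hfin
end
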